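/- Let C₀(Q) ⊆ D ⊆ A be non-degenerate C*-inclusions with C₀(Q) contained in the center of D, let q₁, q₂ ∈ Q, and let n ∈ N_A(C₀(Q)) ∩ N_A(D). Then n C_{0,q₁}(Q) n* ⊆ C_{0,q₂}(Q) if and only if n J^unif_{q₁} n* ⊆ J^unif_{q₂}, where for j = 1, 2, J^unif_{q_j} denotes the closed two-sided ideal of D generated by C_{0,q_j}(Q). -/

import Mathlib

open ZeroAtInfty

/-- The set of normalizers of `S`: `{n | n S n* ⊆ S and n* S n ⊆ S}`. -/
def normalizerIn {R : Type*} [Mul R] [Star R] (S : Set R) : Set R :=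
  {n | ∀ s ∈ S, n * s * star n ∈ S ∧ star n * s * n ∈ S}

/-- `J` is a closed two-sided ideal of (the C*-subalgebra with underlying set) `Bs`. -/
def IsClosedIdealOf {A : Type*} [NonUnitalCStarAlgebra A] (J Bs : Set A) : Prop :=
  J ⊆ Bs ∧ IsClosed J ∧ (0 : A) ∈ J ∧
  (∀ x ∈ J, ∀ y ∈ J, x + y ∈ J) ∧ (∀ c : ℂ, ∀ x ∈ J, c • x ∈ J) ∧
  (∀ x ∈ J, ∀ b ∈ Bs, b * x ∈ J ∧ x * b ∈ J)

/-- `J^unif_q`: the closed two-sided ideal of `D` generated by `C_{0,q}(Q)`, realized as the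
intersection of all closed two-sided ideals of `D` containing `{ι f : f q = 0}`. -/
def JunifD {Q : Type*} [TopologicalSpace Q] [LocallyCompactSpace Q] [T2Space Q]
    {A : Type*} [NonUnitalCStarAlgebra A] (D : NonUnitalStarSubalgebra ℂ A)
    (ι : C₀(Q, ℂ) →⋆ₙₐ[ℂ] A) (q : Q) : Set A :=
  ⋂₀ {L : Set A | IsClosedIdealOf L (D : Set A) ∧ ∀ f : C₀(Q, ℂ), f q = 0 → ι f ∈ L}

/-!
Both directions test membership in a closed ideal of `D` built for the purpose.

(⇒) Nondegeneracy gives `n* n = h ∈ C₀(Q)`: `n* e n → n* n` along an approximate unit `e` of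
`C₀(Q)`, and each `n* e n` lies in the closed set `C₀(Q)`. With `w_k = h̄ / (|h|² + r_k⁴)` and
`r_k → 0` one has `n · (h w_k) → n`, and centrality of `h` in `D` factors
`n (h w_k) b x n* = (n w_k b n*)(n x n*)`. Hence `{x ∈ D | n x n* ∈ J_{q₂}}` is a closed ideal of
`D`; it contains `C_{0,q₁}(Q)`, so it contains `J_{q₁}`.

(⇐) The `x ∈ D` with `e x → x` along an approximate unit `e` of `C_{0,q₂}(Q)` form a closed ideal
of `D` containing `J_{q₂}`. For `x = g ∈ C₀(Q)` this says `e g → g`, and evaluating at `q₂`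
gives `g(q₂) = 0`.
-/

open Filter Topology

section ApproxFixed

variable (𝕜 : Type*) {X A : Type*} [NormedField 𝕜] [NonUnitalNormedRing A] [NormedSpace 𝕜 A]
  [SMulCommClass 𝕜 A A]

def approxFixed (l : Filter X) (F : X → A) : Submodule 𝕜 A where
  carrier := {a | Tendsto (fun x => F x * a) l (𝓝 a)}
  add_mem' ha hb := by simpa only [Set.mem_ofPred_eq, mul_add] using ha.add hb
  zero_mem' := by simpa only [Set.mem_ofPred_eq, mul_zero] using tendsto_const_nhds
  smul_mem' c _ ha := by simpa only [Set.mem_ofPred_eq, mul_smul_comm] using ha.const_smul c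

variable {𝕜} {l : Filter X} {F : X → A}

theorem mem_approxFixed {a : A} :
    a ∈ approxFixed 𝕜 l F ↔ Tendsto (fun x => F x * a) l (𝓝 a) := Iff.rfl

theorem isClosed_approxFixed (hF : ∀ᶠ x in l, ‖F x‖ ≤ 1) :
    IsClosed (approxFixed 𝕜 l F : Set A) := by
  let S := {x | ‖F x‖ ≤ 1}
  have hlip : ∀ s : S, LipschitzWith 1 (fun a : A => F s * a) := fun s =>
    LipschitzWith.of_dist_le_mul fun a b => by
      rw [dist_eq_norm, dist_eq_norm, ← mul_sub, NNReal.coe_one, one_mul]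
      exact (norm_mul_le _ _).trans (mul_le_of_le_one_left (norm_nonneg _) s.2)
  convert (LipschitzWith.uniformEquicontinuous _ 1 hlip).equicontinuous.isClosed_setOfPred_tendsto
    (l := comap (↑) l) continuous_id using 1
  ext a
  change Tendsto _ _ _ ↔ _
  exact (tendsto_comap'_iff (i := ((↑) : S → X)) (by rw [Subtype.range_coe]; exact hF)).symm

theorem mul_mem_approxFixed {a : A} (ha : a ∈ approxFixed 𝕜 l F) (b : A) :
    a * b ∈ approxFixed 𝕜 l F := by
  simpa only [mem_approxFixed, mul_assoc] using ha.mul_const b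

theorem mul_mem_approxFixed_of_commute {a b : A} (ha : a ∈ approxFixed 𝕜 l F)
    (hb : ∀ x, Commute b (F x)) : b * a ∈ approxFixed 𝕜 l F := by
  refine (ha.const_mul b).congr fun x => ?_
  rw [← mul_assoc, (hb x).eq, mul_assoc]

end ApproxFixed

theorem CStarAlgebra.exists_isApproximateUnit_norm_le_one (B : Type*) [NonUnitalCStarAlgebra B] :
    ∃ l : Filter B, l.IsApproximateUnit ∧ ∀ᶠ e in l, ‖e‖ ≤ 1 := by
  let _ := CStarAlgebra.spectralOrder B
  have _ := CStarAlgebra.spectralOrderedRing B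
  exact ⟨_, (CStarAlgebra.increasingApproximateUnit B).toIsApproximateUnit,
    (CStarAlgebra.increasingApproximateUnit B).eventually_norm⟩

namespace ZeroAtInftyContinuousMap

variable {Q : Type*} [TopologicalSpace Q]

instance {β : Type*} [SeminormedAddCommGroup β] : ContinuousEvalConst C₀(Q, β) Q β where
  continuous_eval_const q :=
    (continuous_eval_const (F := BoundedContinuousFunction Q β) q).comp
      isometry_toBCF.continuous

def vanishingAt (q : Q) : NonUnitalStarSubalgebra ℂ C₀(Q, ℂ) where
  carrier := {f | f q = 0}
  add_mem' {f g} (hf : f q = 0) (hg : g q = 0) := by simp [hf, hg]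
  zero_mem' := rfl
  mul_mem' {f g} (hf : f q = 0) _ := by simp [hf]
  smul_mem' c f (hf : f q = 0) := by simp [hf]
  star_mem' {f} (hf : f q = 0) := by simp [hf]

instance (q : Q) : IsClosed (vanishingAt q : Set C₀(Q, ℂ)) :=
  show IsClosed ((fun f : C₀(Q, ℂ) => f q) ⁻¹' {0}) from
    isClosed_singleton.preimage (continuous_eval_const q)

theorem exists_approximateUnit_vanishingAt (q : Q) :
    ∃ l : Filter C₀(Q, ℂ), l.NeBot ∧ (∀ᶠ e in l, ‖e‖ ≤ 1 ∧ e q = 0) ∧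
      ∀ f : C₀(Q, ℂ), f q = 0 → Tendsto (· * f) l (𝓝 f) := by
  obtain ⟨l, hl, hnorm⟩ := CStarAlgebra.exists_isApproximateUnit_norm_le_one (vanishingAt q)
  refine ⟨map (↑) l, hl.neBot.map _, ?_, fun f hf => ?_⟩
  · exact eventually_map.mpr (hnorm.mono fun e he => ⟨he, e.2⟩)
  · have := hl.tendsto_mul_right ⟨f, hf⟩
    exact tendsto_map'_iff.mpr ((continuous_subtype_val.tendsto _).comp this)

end ZeroAtInftyContinuousMap

theorem mul_div_sq_add_pow_four_sq_le {t r : ℝ} (ht : 0 ≤ t) (hr : 0 < r) :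
    t * (r ^ 4 / (t ^ 2 + r ^ 4)) ^ 2 ≤ r ^ 2 := by
  rw [div_pow, mul_div_assoc', div_le_iff₀ (by positivity)]
  nlinarith [mul_nonneg (pow_nonneg hr.le 6) (sq_nonneg (t - r ^ 2)),
    mul_nonneg (pow_nonneg hr.le 2) (pow_nonneg ht 4),
    mul_nonneg (pow_nonneg hr.le 6) (sq_nonneg t),
    mul_nonneg ht (pow_nonneg hr.le 8)]

section Normalizer

variable {Q : Type*} [TopologicalSpace Q] {A : Type*} [NonUnitalCStarAlgebra A]
  {ι : C₀(Q, ℂ) →⋆ₙₐ[ℂ] A}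

theorem norm_sub_mul_map_sq_le (hisom : Isometry ι) {n : A} {h : C₀(Q, ℂ)}
    (hh : ι h = star n * n) (u : C₀(Q, ℂ)) {C : ℝ} (hC : 0 ≤ C)
    (hbound : ∀ x, ‖h x‖ * ‖1 - u x‖ ^ 2 ≤ C) : ‖n - n * ι u‖ ^ 2 ≤ C := by
  have hstar : star (n - n * ι u) * (n - n * ι u) =
      ι (h - star u * h - h * u + star u * h * u) := by
    simp only [map_sub, map_add, map_mul, map_star, hh, star_sub, star_mul]
    noncomm_ring
  rw [sq, ← CStarRing.norm_star_mul_self, hstar, hisom.norm_map_of_map_zero (map_zero ι),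
    ← ZeroAtInftyContinuousMap.norm_toBCF_eq_norm, BoundedContinuousFunction.norm_le hC]
  intro x
  have hx : (h - star u * h - h * u + star u * h * u) x = h x * (star (1 - u x) * (1 - u x)) := by
    simp only [ZeroAtInftyContinuousMap.sub_apply, ZeroAtInftyContinuousMap.add_apply,
      ZeroAtInftyContinuousMap.mul_apply, ZeroAtInftyContinuousMap.star_apply, star_sub, star_one]
    ring
  calc ‖(h - star u * h - h * u + star u * h * u).toBCF x‖ = ‖h x‖ * ‖1 - u x‖ ^ 2 := by
        rw [show (h - star u * h - h * u + star u * h * u).toBCF x = _ from hx, norm_mul, norm_mul,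
          norm_star, sq]
    _ ≤ C := hbound x

theorem exists_norm_sub_mul_map_mul_le (hisom : Isometry ι) {n : A} {h : C₀(Q, ℂ)}
    (hh : ι h = star n * n) {r : ℝ} (hr : 0 < r) :
    ∃ w : C₀(Q, ℂ), ‖n - n * ι (h * w)‖ ≤ r := by
  let G : ℂ → ℂ := fun z => star z / ((‖z‖ ^ 2 + r ^ 4 : ℝ) : ℂ)
  have hG : Continuous G := by
    refine Continuous.div (by fun_prop) (by fun_prop) fun z => ?_
    exact_mod_cast (by positivity : (‖z‖ ^ 2 + r ^ 4 : ℝ) ≠ 0)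
  let w : C₀(Q, ℂ) := ⟨⟨G ∘ h, hG.comp h.continuous⟩,
    by simpa [G] using (hG.tendsto 0).comp (zero_at_infty h)⟩
  refine ⟨w, (sq_le_sq₀ (norm_nonneg _) hr.le).mp ?_⟩
  refine norm_sub_mul_map_sq_le hisom hh _ (by positivity) fun x => ?_
  have hx : 1 - (h * w) x = ((r ^ 4 / (‖h x‖ ^ 2 + r ^ 4) : ℝ) : ℂ) := by
    have hpos : ((‖h x‖ ^ 2 + r ^ 4 : ℝ) : ℂ) ≠ 0 := by exact_mod_cast (by positivity)
    have hw : w x = star (h x) / ((‖h x‖ ^ 2 + r ^ 4 : ℝ) : ℂ) := rfl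
    rw [ZeroAtInftyContinuousMap.mul_apply, hw, mul_div_assoc', Complex.star_def,
      Complex.mul_conj', Complex.ofReal_div, one_sub_div hpos]
    push_cast
    ring
  rw [hx, Complex.norm_real, Real.norm_of_nonneg (by positivity)]
  exact mul_div_sq_add_pow_four_sq_le (norm_nonneg _) hr

theorem exists_tendsto_mul_map_mul (hisom : Isometry ι) {n : A} {h : C₀(Q, ℂ)}
    (hh : ι h = star n * n) :
    ∃ w : ℕ → C₀(Q, ℂ), Tendsto (fun k => n * ι (h * w k)) atTop (𝓝 n) := by
  choose w hw using fun k : ℕ =>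
    exists_norm_sub_mul_map_mul_le hisom hh (Nat.one_div_pos_of_nat (α := ℝ) (n := k))
  refine ⟨w, tendsto_iff_norm_sub_tendsto_zero.mpr ?_⟩
  refine squeeze_zero (fun _ => norm_nonneg _) (fun k => ?_) tendsto_one_div_add_atTop_nhds_zero_nat
  rw [norm_sub_rev]
  exact hw k

theorem exists_tendsto_map_mul_of_nondegenerate (D : NonUnitalStarSubalgebra ℂ A)
    (hisom : Isometry ι)
    (hnd₁ : closure (Submodule.span ℂ
        {x : A | ∃ f : C₀(Q, ℂ), ∃ d ∈ D, x = ι f * d} : Set A) = (D : Set A))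
    (hnd₂ : closure (Submodule.span ℂ
        {x : A | ∃ d ∈ D, ∃ a : A, x = d * a} : Set A) = Set.univ) :
    ∃ l : Filter C₀(Q, ℂ), l.NeBot ∧ ∀ a : A, Tendsto (fun e => ι e * a) l (𝓝 a) := by
  obtain ⟨l, hl, hnorm⟩ := CStarAlgebra.exists_isApproximateUnit_norm_le_one C₀(Q, ℂ)
  have hW : IsClosed (approxFixed ℂ l ι : Set A) :=
    isClosed_approxFixed (hnorm.mono fun e he => by rwa [hisom.norm_map_of_map_zero (map_zero ι)])
  have hD : (D : Set A) ⊆ approxFixed ℂ l ι := by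
    rw [← hnd₁]
    refine closure_minimal (Submodule.span_le.mpr ?_) hW
    rintro _ ⟨f, d, -, rfl⟩
    have := ((hisom.continuous.tendsto f).comp (hl.tendsto_mul_right f)).mul_const d
    exact mem_approxFixed.mpr (by simpa only [Function.comp_def, map_mul, mul_assoc] using this)
  have hA : Set.univ ⊆ (approxFixed ℂ l ι : Set A) := by
    rw [← hnd₂]
    refine closure_minimal (Submodule.span_le.mpr ?_) hW
    rintro _ ⟨d, hd, a, rfl⟩
    exact mul_mem_approxFixed (hD hd) a
  exact ⟨l, hl.neBot, fun a => hA (Set.mem_univ a)⟩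

theorem star_mul_self_mem_range (hisom : Isometry ι) {l : Filter C₀(Q, ℂ)} [l.NeBot]
    (hl : ∀ a : A, Tendsto (fun e => ι e * a) l (𝓝 a)) {n : A}
    (hn : n ∈ normalizerIn (Set.range ι)) : star n * n ∈ Set.range ι := by
  have hlim : Tendsto (fun e => star n * ι e * n) l (𝓝 (star n * n)) := by
    simpa only [mul_assoc] using (hl n).const_mul (star n)
  exact hisom.isClosedEmbedding.isClosed_range.mem_of_tendsto hlim
    (Eventually.of_forall fun e => (hn (ι e) ⟨e, rfl⟩).2)

end Normalizer

section ClosedIdeal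

variable {A : Type*} [NonUnitalCStarAlgebra A]

theorem IsClosedIdealOf.sInter {S : Set (Set A)} {Bs : Set A}
    (hS : ∀ L ∈ S, IsClosedIdealOf L Bs) (hne : S.Nonempty) : IsClosedIdealOf (⋂₀ S) Bs := by
  obtain ⟨L₀, hL₀⟩ := hne
  refine ⟨(Set.sInter_subset_of_mem hL₀).trans (hS L₀ hL₀).1,
    isClosed_sInter fun L hL => (hS L hL).2.1, Set.mem_sInter.2 fun L hL => (hS L hL).2.2.1,
    fun x hx y hy => Set.mem_sInter.2 fun L hL => (hS L hL).2.2.2.1 x (hx L hL) y (hy L hL),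
    fun c x hx => Set.mem_sInter.2 fun L hL => (hS L hL).2.2.2.2.1 c x (hx L hL),
    fun x hx b hb => ⟨Set.mem_sInter.2 fun L hL => ((hS L hL).2.2.2.2.2 x (hx L hL) b hb).1,
      Set.mem_sInter.2 fun L hL => ((hS L hL).2.2.2.2.2 x (hx L hL) b hb).2⟩⟩

variable {Q : Type*} [TopologicalSpace Q] {ι : C₀(Q, ℂ) →⋆ₙₐ[ℂ] A}
  {D : NonUnitalStarSubalgebra ℂ A}

theorem isClosedIdealOf_self (hD : IsClosed (D : Set A)) : IsClosedIdealOf (D : Set A) D :=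
  ⟨subset_rfl, hD, zero_mem D, fun _ hx _ hy => add_mem hx hy,
    fun c _ hx => SMulMemClass.smul_mem c hx, fun _ hx _ hb => ⟨mul_mem hb hx, mul_mem hx hb⟩⟩

theorem isClosedIdealOf_inter_approxFixed (hD : IsClosed (D : Set A)) (hisom : Isometry ι)
    (hcentral : ∀ f : C₀(Q, ℂ), ∀ d ∈ D, ι f * d = d * ι f) {l : Filter C₀(Q, ℂ)}
    (hl : ∀ᶠ e in l, ‖e‖ ≤ 1) : IsClosedIdealOf ((D : Set A) ∩ approxFixed ℂ l ι) D :=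
  ⟨Set.inter_subset_left,
    hD.inter (isClosed_approxFixed (hl.mono fun e he => by
      rwa [hisom.norm_map_of_map_zero (map_zero ι)])),
    ⟨zero_mem D, zero_mem _⟩, fun _ hx _ hy => ⟨add_mem hx.1 hy.1, add_mem hx.2 hy.2⟩,
    fun c _ hx => ⟨SMulMemClass.smul_mem c hx.1, Submodule.smul_mem _ c hx.2⟩,
    fun x hx b hb => ⟨⟨mul_mem hb hx.1,
      mul_mem_approxFixed_of_commute hx.2 fun e => (hcentral e b hb).symm⟩,
      ⟨mul_mem hx.1 hb, mul_mem_approxFixed hx.2 b⟩⟩⟩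

theorem conj_mul_mem_left (hrange : ∀ f : C₀(Q, ℂ), ι f ∈ D)
    (hcentral : ∀ f : C₀(Q, ℂ), ∀ d ∈ D, ι f * d = d * ι f) {J : Set A}
    (hJ : IsClosedIdealOf J D) {n : A} (hn : n ∈ normalizerIn (D : Set A)) {h : C₀(Q, ℂ)}
    (hh : ι h = star n * n) {w : ℕ → C₀(Q, ℂ)}
    (hw : Tendsto (fun k => n * ι (h * w k)) atTop (𝓝 n)) {x b : A}
    (hx : n * x * star n ∈ J) (hb : b ∈ D) : n * (b * x) * star n ∈ J := by
  have hlim : Tendsto (fun k => n * ι (h * w k) * b * x * star n) atTop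
      (𝓝 (n * (b * x) * star n)) := by
    simpa only [mul_assoc] using ((hw.mul_const b).mul_const x).mul_const (star n)
  refine hJ.2.1.mem_of_tendsto hlim (Eventually.of_forall fun k => ?_)
  have hfactor : n * ι (h * w k) * b * x * star n
      = n * (ι (w k) * b) * star n * (n * x * star n) :=
    calc n * ι (h * w k) * b * x * star n = n * (ι (w k) * (ι h * b)) * x * star n := by
          rw [mul_comm h, map_mul]; noncomm_ring
      _ = n * (ι (w k) * b) * star n * (n * x * star n) := by
          rw [hcentral h b hb, hh]; noncomm_ring
  rw [hfactor]
  exact (hJ.2.2.2.2.2 _ hx _ (hn _ (mul_mem (hrange _) hb)).1).1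

theorem conj_mul_mem_right (hrange : ∀ f : C₀(Q, ℂ), ι f ∈ D)
    (hcentral : ∀ f : C₀(Q, ℂ), ∀ d ∈ D, ι f * d = d * ι f) {J : Set A}
    (hJ : IsClosedIdealOf J D) {n : A} (hn : n ∈ normalizerIn (D : Set A)) {h : C₀(Q, ℂ)}
    (hh : ι h = star n * n) {w : ℕ → C₀(Q, ℂ)}
    (hw : Tendsto (fun k => n * ι (h * w k)) atTop (𝓝 n)) {x b : A}
    (hx : n * x * star n ∈ J) (hb : b ∈ D) : n * (x * b) * star n ∈ J := by
  have hlim : Tendsto (fun k => n * x * b * star (n * ι (h * w k))) atTop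
      (𝓝 (n * (x * b) * star n)) := by
    simpa only [mul_assoc] using hw.star.const_mul (n * x * b)
  refine hJ.2.1.mem_of_tendsto hlim (Eventually.of_forall fun k => ?_)
  have hstar : star (n * ι (h * w k)) = ι (star (w k)) * ι h * star n := by
    simp only [star_mul, map_mul, map_star, hh, star_star]
  have hfactor : n * x * b * star (n * ι (h * w k))
      = n * x * star n * (n * (b * ι (star (w k))) * star n) :=
    calc n * x * b * star (n * ι (h * w k))
        = n * x * (b * ι (star (w k)) * ι h) * star n := by rw [hstar]; noncomm_ring
      _ = n * x * star n * (n * (b * ι (star (w k))) * star n) := by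
          rw [← hcentral h _ (mul_mem hb (hrange _)), hh]; noncomm_ring
  rw [hfactor]
  exact (hJ.2.2.2.2.2 _ hx _ (hn _ (mul_mem hb (hrange _))).1).2

theorem isClosedIdealOf_conj_preimage (hD : IsClosed (D : Set A))
    (hrange : ∀ f : C₀(Q, ℂ), ι f ∈ D) (hcentral : ∀ f : C₀(Q, ℂ), ∀ d ∈ D, ι f * d = d * ι f)
    {J : Set A} (hJ : IsClosedIdealOf J D) {n : A} (hn : n ∈ normalizerIn (D : Set A))
    {h : C₀(Q, ℂ)} (hh : ι h = star n * n) {w : ℕ → C₀(Q, ℂ)}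
    (hw : Tendsto (fun k => n * ι (h * w k)) atTop (𝓝 n)) :
    IsClosedIdealOf {x ∈ (D : Set A) | n * x * star n ∈ J} D := by
  have ⟨_, hJc, hJ0, hJadd, hJsmul, _⟩ := hJ
  refine ⟨fun x hx => hx.1, hD.inter (hJc.preimage (by fun_prop)),
    ⟨zero_mem D, by simpa only [mul_zero, zero_mul] using hJ0⟩,
    fun x hx y hy => ⟨add_mem hx.1 hy.1,
      by simpa only [mul_add, add_mul] using hJadd _ hx.2 _ hy.2⟩,
    fun c x hx => ⟨SMulMemClass.smul_mem c hx.1,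
      by simpa only [mul_smul_comm, smul_mul_assoc] using hJsmul c _ hx.2⟩,
    fun x hx b hb => ⟨⟨mul_mem hb hx.1, conj_mul_mem_left hrange hcentral hJ hn hh hw hx.2 hb⟩,
      ⟨mul_mem hx.1 hb, conj_mul_mem_right hrange hcentral hJ hn hh hw hx.2 hb⟩⟩⟩

end ClosedIdeal

section JunifD

variable {Q : Type*} [TopologicalSpace Q] [LocallyCompactSpace Q] [T2Space Q]
  {A : Type*} [NonUnitalCStarAlgebra A] {ι : C₀(Q, ℂ) →⋆ₙₐ[ℂ] A}
  {D : NonUnitalStarSubalgebra ℂ A}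

theorem isClosedIdealOf_JunifD (hD : IsClosed (D : Set A)) (hrange : ∀ f : C₀(Q, ℂ), ι f ∈ D)
    (q : Q) : IsClosedIdealOf (JunifD D ι q) D :=
  IsClosedIdealOf.sInter (fun _ hL => hL.1) ⟨D, isClosedIdealOf_self hD, fun f _ => hrange f⟩

theorem JunifD_subset {q : Q} {L : Set A} (hL : IsClosedIdealOf L D)
    (hgen : ∀ f : C₀(Q, ℂ), f q = 0 → ι f ∈ L) : JunifD D ι q ⊆ L :=
  Set.sInter_subset_of_mem ⟨hL, hgen⟩

theorem mem_JunifD {q : Q} {f : C₀(Q, ℂ)} (hf : f q = 0) : ι f ∈ JunifD D ι q :=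
  Set.mem_sInter.2 fun _ hL => hL.2 f hf

theorem eq_zero_of_mem_JunifD (hD : IsClosed (D : Set A)) (hisom : Isometry ι)
    (hrange : ∀ f : C₀(Q, ℂ), ι f ∈ D) (hcentral : ∀ f : C₀(Q, ℂ), ∀ d ∈ D, ι f * d = d * ι f)
    {q : Q} {g : C₀(Q, ℂ)} (hg : ι g ∈ JunifD D ι q) : g q = 0 := by
  obtain ⟨l, hl, hvan, hunit⟩ := ZeroAtInftyContinuousMap.exists_approximateUnit_vanishingAt q
  have hL := isClosedIdealOf_inter_approxFixed hD hisom hcentral (hvan.mono fun e he => he.1)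
  have hgen : ∀ f : C₀(Q, ℂ), f q = 0 → ι f ∈ (D : Set A) ∩ approxFixed ℂ l ι := fun f hf =>
    ⟨hrange f, mem_approxFixed.mpr (by simpa only [Function.comp_def, map_mul] using
      (hisom.continuous.tendsto f).comp (hunit f hf))⟩
  have hlim : Tendsto (fun e => e * g) l (𝓝 g) :=
    hisom.isEmbedding.tendsto_nhds_iff.mpr <| by
      simpa only [Function.comp_def, map_mul] using mem_approxFixed.mp (JunifD_subset hL hgen hg).2
  have hq : Tendsto (fun e => (e * g) q) l (𝓝 (g q)) :=
    ((continuous_eval_const q).tendsto g).comp hlim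
  exact tendsto_nhds_unique hq (tendsto_const_nhds.congr' (hvan.mono fun e he => by simp [he.2]))

end JunifD

/-- With non-degenerate inclusions `C₀(Q) ⊆ D ⊆ A`, `C₀(Q)` central in `D`,
and `n ∈ N_A(C₀(Q)) ∩ N_A(D)`: `n C_{0,q₁}(Q) n* ⊆ C_{0,q₂}(Q)` iff
`n J^unif_{q₁} n* ⊆ J^unif_{q₂}`. -/
theorem stmt18 {Q : Type*} [TopologicalSpace Q] [LocallyCompactSpace Q] [T2Space Q]
    {A : Type*} [NonUnitalCStarAlgebra A]
    (D : NonUnitalStarSubalgebra ℂ A) (hDclosed : IsClosed (D : Set A))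
    (ι : C₀(Q, ℂ) →⋆ₙₐ[ℂ] A) (hisom : Isometry ι)
    (hrange : ∀ f : C₀(Q, ℂ), ι f ∈ D)
    (hcentral : ∀ f : C₀(Q, ℂ), ∀ d ∈ D, ι f * d = d * ι f)
    -- non-degeneracy of `C₀(Q) ⊆ D` :
    (hnd₁ : closure (Submodule.span ℂ
        {x : A | ∃ f : C₀(Q, ℂ), ∃ d ∈ D, x = ι f * d} : Set A) = (D : Set A))
    -- non-degeneracy of `D ⊆ A` :
    (hnd₂ : closure (Submodule.span ℂ
        {x : A | ∃ d ∈ D, ∃ a : A, x = d * a} : Set A) = Set.univ)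
    (q₁ q₂ : Q) (n : A)
    (hn : n ∈ normalizerIn (Set.range ι) ∩ normalizerIn (D : Set A)) :
    (∀ f : C₀(Q, ℂ), f q₁ = 0 → ∃ g : C₀(Q, ℂ), g q₂ = 0 ∧ n * ι f * star n = ι g) ↔
    (∀ x ∈ JunifD D ι q₁, n * x * star n ∈ JunifD D ι q₂) := by
  constructor
  · intro H x hx
    obtain ⟨l, hl, hunit⟩ := exists_tendsto_map_mul_of_nondegenerate D hisom hnd₁ hnd₂
    obtain ⟨h, hh⟩ := star_mul_self_mem_range hisom hunit hn.1
    obtain ⟨w, hw⟩ := exists_tendsto_mul_map_mul hisom hh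
    have hT := isClosedIdealOf_conj_preimage hDclosed hrange hcentral
      (isClosedIdealOf_JunifD hDclosed hrange q₂) hn.2 hh hw
    refine (JunifD_subset hT (fun f hf => ⟨hrange f, ?_⟩) hx).2
    obtain ⟨g, hg, hfg⟩ := H f hf
    exact hfg ▸ mem_JunifD hg
  · intro H f hf
    obtain ⟨g, hg⟩ := (hn.1 (ι f) ⟨f, rfl⟩).1
    exact ⟨g, eq_zero_of_mem_JunifD hDclosed hisom hrange hcentral (hg ▸ H _ (mem_JunifD hf)),
      hg.symm⟩
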